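/- arXiv:0802.0996 — 2 statements merged into one kernel-verified Lean document; each statement's English description precedes it below -/
import Mathlib

section
/- Let F₁ and F₂ be formal group laws over commutative rings A₁ and A₂, with classifying maps λ₁ : L → A₁ and λ₂ : L → A₂. Then for every commutative ring R there is a bijection, natural in R, between the set of ring homomorphisms A₁ ⊗_{λ₁, L, η_L} W ⊗_{η_R, L, λ₂} A₂ → R and the set of triples (f₁, f₂, φ) where f₁ : A₁ → R and f₂ : A₂ → R are ring homomorphisms and φ : (f₁)_*F₁ → (f₂)_*F₂ is an isomorphism of formal group laws over R. (Strickland's observation: the 2-category pullback Spec(A₁) ×_{M_fg} Spec(A₂) is the affine scheme Spec(A₁ ⊗_L W ⊗_L A₂).) -/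
/-! A ring map out of `A₁ ⊗_L W ⊗_L A₂` is a triple of ring maps `f₁, g, f₂` out of the
factors that agree on `L`. As `W` is polynomial over `L` on the coefficients of the invertible
series `φ_u`, the map `g` amounts to `g ∘ η_L = f₁ ∘ λ₁` together with the series
`φ = g_* φ_u`, which is then an isomorphism `f₁_* F₁ → g_* G_W`. By universality of `F_u`, the
remaining condition `g ∘ η_R = f₂ ∘ λ₂` says `g_* G_W = f₂_* F₂`, i.e. that `φ` is an
isomorphism onto `f₂_* F₂`: the target of an isomorphism is determined by its source, since
`G ↦ G(φ(x), φ(y))` is injective when `φ'(0)` is a unit (it is triangular in the coefficients,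
with unit diagonal). -/

noncomputable section

namespace FGL

open Finset

variable {A B : Type*} [CommRing A] [CommRing B] {τ : Type*}

/-- The total degree of a monomial exponent. -/
def deg {σ : Type*} (d : σ →₀ ℕ) : ℕ := d.sum fun _ n => n

/-- The exponent `(i, j)` as an element of `Fin 2 →₀ ℕ`. -/
def mon2 (i j : ℕ) : Fin 2 →₀ ℕ := Finsupp.single 0 i + Finsupp.single 1 j

/-- Substitution `F(g, h)` of two power series (each assumed to have zero constant
term) into a two-variable power series `F`. -/
def subst2 (F : MvPowerSeries (Fin 2) A) (g h : MvPowerSeries τ A) :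
    MvPowerSeries τ A :=
  fun d => ∑ e ∈ range (deg d + 1) ×ˢ range (deg d + 1),
    MvPowerSeries.coeff (mon2 e.1 e.2) F * MvPowerSeries.coeff d (g ^ e.1 * h ^ e.2)

/-- Substitution `f(g)` of a power series `g` (assumed to have zero constant term)
into a one-variable power series `f`. -/
def substPS (f : PowerSeries A) (g : MvPowerSeries τ A) : MvPowerSeries τ A :=
  fun d => ∑ n ∈ range (deg d + 1),
    PowerSeries.coeff n f * MvPowerSeries.coeff d (g ^ n)

/-- Composition `f(g)` of one-variable power series (`g` has zero constant term). -/
def comp (f g : PowerSeries A) : PowerSeries A := substPS f g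

/-- `F` is a (commutative, one-dimensional) formal group law:
`F(x,0) = x`, `F(0,y) = y`, `F(x,y) = F(y,x)` and `F(F(x,y),z) = F(x,F(y,z))`. -/
def IsFGL (F : MvPowerSeries (Fin 2) A) : Prop :=
  subst2 F (MvPowerSeries.X 0) 0 = MvPowerSeries.X 0 ∧
  subst2 F 0 (MvPowerSeries.X 1) = MvPowerSeries.X 1 ∧
  subst2 F (MvPowerSeries.X 1) (MvPowerSeries.X 0) = F ∧
  subst2 F (subst2 F (MvPowerSeries.X 0) (MvPowerSeries.X 1))
      (MvPowerSeries.X 2 : MvPowerSeries (Fin 3) A)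
    = subst2 F (MvPowerSeries.X 0) (subst2 F (MvPowerSeries.X 1) (MvPowerSeries.X 2))

/-- `f` is a homomorphism of formal group laws `F → G`:
`f(0) = 0` and `f(F(x,y)) = G(f(x), f(y))`. -/
def IsHom (F G : MvPowerSeries (Fin 2) A) (f : PowerSeries A) : Prop :=
  PowerSeries.constantCoeff f = 0 ∧
  substPS f F = subst2 G (substPS f (MvPowerSeries.X 0)) (substPS f (MvPowerSeries.X 1))

/-- `f` is an isomorphism of formal group laws `F → G`: a homomorphism whose
linear coefficient is a unit. -/
def IsIso (F G : MvPowerSeries (Fin 2) A) (f : PowerSeries A) : Prop :=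
  IsHom F G f ∧ IsUnit (PowerSeries.coeff 1 f)

/-- `f` is a strict isomorphism of formal group laws `F → G`: a homomorphism whose
linear coefficient is `1`. -/
def IsStrictIso (F G : MvPowerSeries (Fin 2) A) (f : PowerSeries A) : Prop :=
  IsHom F G f ∧ PowerSeries.coeff 1 f = 1

/-- The `n`-series `[n]_F` of a formal group law, defined by `[0]_F = 0` and
`[n+1]_F(x) = F(x, [n]_F(x))`. -/
def nSeries (F : MvPowerSeries (Fin 2) A) : ℕ → PowerSeries A
  | 0 => 0
  | n + 1 => subst2 F PowerSeries.X (nSeries F n)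

/-- `F` has height `≥ n` (at the prime `p`): the coefficient of `x^i` in `[p]_F`
vanishes for all `i < p^n`. -/
def HeightGE (p : ℕ) (F : MvPowerSeries (Fin 2) A) (n : ℕ) : Prop :=
  ∀ i < p ^ n, PowerSeries.coeff i (nSeries F p) = 0

/-- `F` has strict height `n` (at the prime `p`): it has height `≥ n` and the
coefficient of `x^{p^n}` in `[p]_F` is a unit. -/
def StrictHeight (p : ℕ) (F : MvPowerSeries (Fin 2) A) (n : ℕ) : Prop :=
  HeightGE p F n ∧ IsUnit (PowerSeries.coeff (p ^ n) (nSeries F p))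

/-- Coefficients of the compositional inverse of a power series `f` with `f(0) = 0`
and invertible linear coefficient. -/
def invCoeff (f : PowerSeries A) : ℕ → A
  | 0 => 0
  | 1 => Ring.inverse (PowerSeries.coeff 1 f)
  | n + 2 =>
    - Ring.inverse ((PowerSeries.coeff 1 f) ^ (n + 2)) *
      ∑ k ∈ (range (n + 2)).attach,
        invCoeff f k.1 * PowerSeries.coeff (n + 2) (f ^ (k.1 : ℕ))
  decreasing_by exact Finset.mem_range.mp k.2

/-- The compositional inverse of a power series `f` with `f(0) = 0` and invertible
linear coefficient. -/
def compInv (f : PowerSeries A) : PowerSeries A := PowerSeries.mk (invCoeff f)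

end FGL

open FGL

/-- The ring `W = L[a₀, a₁, a₂, …][a₀⁻¹]`: the polynomial ring over `L` on countably
many generators `a₀, a₁, a₂, …` (indexed by `some i`), with an inverse for `a₀`
adjoined (indexed by `none`). -/
abbrev Wring (L : Type) [CommRing L] : Type :=
  MvPolynomial (Option ℕ) L ⧸
    (Ideal.span ({MvPolynomial.X none * MvPolynomial.X (some 0) - 1} :
      Set (MvPolynomial (Option ℕ) L)))

/-- The generator `aᵢ` of `W`. -/
noncomputable def aGen (L : Type) [CommRing L] (i : ℕ) : Wring L :=
  Ideal.Quotient.mk _ (MvPolynomial.X (some i))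

/-- The left unit `η_L : L → W`. -/
noncomputable def etaL (L : Type) [CommRing L] : L →+* Wring L :=
  (Ideal.Quotient.mk _).comp MvPolynomial.C

/-- The universal invertible power series `φ_u(x) = Σ_{i ≥ 0} aᵢ x^{i+1}` over `W`. -/
noncomputable def phiU (L : Type) [CommRing L] : PowerSeries (Wring L) :=
  PowerSeries.mk fun n => if n = 0 then 0 else aGen L (n - 1)

open TensorProduct

section Pushout

variable (L A₁ A₂ : Type) [CommRing L] [CommRing A₁] [CommRing A₂]

/-- The underlying tensor product `(A₁ ⊗_ℤ W) ⊗_ℤ A₂`. -/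
abbrev T0 : Type := (A₁ ⊗[ℤ] Wring L) ⊗[ℤ] A₂

noncomputable instance : CommRing (T0 L A₁ A₂) :=
  @Algebra.TensorProduct.instCommRing ℤ (A₁ ⊗[ℤ] Wring L) A₂ _ _ Algebra.TensorProduct.leftAlgebra _ _

/-- Inclusion of `A₁` into `(A₁ ⊗_ℤ W) ⊗_ℤ A₂`. -/
noncomputable def j1 : A₁ →+* T0 L A₁ A₂ :=
  Algebra.TensorProduct.includeLeftRingHom.comp Algebra.TensorProduct.includeLeftRingHom

/-- Inclusion of `W` into `(A₁ ⊗_ℤ W) ⊗_ℤ A₂`. -/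
noncomputable def jW : Wring L →+* T0 L A₁ A₂ :=
  Algebra.TensorProduct.includeLeftRingHom.comp Algebra.TensorProduct.includeRight.toRingHom

/-- Inclusion of `A₂` into `(A₁ ⊗_ℤ W) ⊗_ℤ A₂`. -/
noncomputable def j2 : A₂ →+* T0 L A₁ A₂ :=
  (Algebra.TensorProduct.includeRight (R := ℤ) (A := A₁ ⊗[ℤ] Wring L) (B := A₂)).toRingHom

variable (lam1 : L →+* A₁) (lam2 : L →+* A₂) (etaR : L →+* Wring L)

/-- The ideal of relations identifying the two `L`-algebra structures, so that the
quotient is `A₁ ⊗_{λ₁, L, η_L} W ⊗_{η_R, L, λ₂} A₂`. -/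
noncomputable def relIdeal : Ideal (T0 L A₁ A₂) :=
  Ideal.span
    ({x | ∃ l, x = j1 L A₁ A₂ (lam1 l) - jW L A₁ A₂ (etaL L l)} ∪
     {x | ∃ l, x = j2 L A₁ A₂ (lam2 l) - jW L A₁ A₂ (etaR l)})

/-- The two-sided tensor product `A₁ ⊗_{λ₁, L, η_L} W ⊗_{η_R, L, λ₂} A₂`. -/
abbrev Tring : Type := T0 L A₁ A₂ ⧸ relIdeal L A₁ A₂ lam1 lam2 etaR

/-- The canonical map `A₁ → A₁ ⊗_L W ⊗_L A₂`. -/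
noncomputable def iota1 : A₁ →+* Tring L A₁ A₂ lam1 lam2 etaR :=
  (Ideal.Quotient.mk _).comp (j1 L A₁ A₂)

/-- The canonical map `W → A₁ ⊗_L W ⊗_L A₂`. -/
noncomputable def iotaW : Wring L →+* Tring L A₁ A₂ lam1 lam2 etaR :=
  (Ideal.Quotient.mk _).comp (jW L A₁ A₂)

/-- The canonical map `A₂ → A₁ ⊗_L W ⊗_L A₂`. -/
noncomputable def iota2 : A₂ →+* Tring L A₁ A₂ lam1 lam2 etaR :=
  (Ideal.Quotient.mk _).comp (j2 L A₁ A₂)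

end Pushout

namespace FGL

open Finset

variable {A B : Type*} [CommRing A] [CommRing B] {τ : Type*}

lemma coeff_subst2 (F : MvPowerSeries (Fin 2) A) (g h : MvPowerSeries τ A) (d : τ →₀ ℕ) :
    MvPowerSeries.coeff d (subst2 F g h) =
      ∑ e ∈ range (deg d + 1) ×ˢ range (deg d + 1),
        MvPowerSeries.coeff (mon2 e.1 e.2) F * MvPowerSeries.coeff d (g ^ e.1 * h ^ e.2) :=
  rfl

lemma coeff_substPS (φ : PowerSeries A) (g : MvPowerSeries τ A) (d : τ →₀ ℕ) :
    MvPowerSeries.coeff d (substPS φ g) =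
      ∑ n ∈ range (deg d + 1), PowerSeries.coeff n φ * MvPowerSeries.coeff d (g ^ n) :=
  rfl

lemma subst2_sub (F F' : MvPowerSeries (Fin 2) A) (g h : MvPowerSeries τ A) :
    subst2 (F - F') g h = subst2 F g h - subst2 F' g h := by
  ext d
  simp only [coeff_subst2, map_sub, sub_mul, sum_sub_distrib]

lemma map_subst2 (f : A →+* B) (F : MvPowerSeries (Fin 2) A) (g h : MvPowerSeries τ A) :
    MvPowerSeries.map f (subst2 F g h) =
      subst2 (MvPowerSeries.map f F) (MvPowerSeries.map f g) (MvPowerSeries.map f h) := by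
  ext d
  simp [coeff_subst2, ← map_pow, ← map_mul]

lemma map_substPS (f : A →+* B) (φ : PowerSeries A) (g : MvPowerSeries τ A) :
    MvPowerSeries.map f (substPS φ g) =
      substPS (PowerSeries.map f φ) (MvPowerSeries.map f g) := by
  ext d
  simp [coeff_substPS, ← map_pow]

lemma IsFGL.map {F : MvPowerSeries (Fin 2) A} (hF : IsFGL F) (f : A →+* B) :
    IsFGL (MvPowerSeries.map f F) := by
  obtain ⟨h₁, h₂, h₃, h₄⟩ := hF
  refine ⟨?_, ?_, ?_, ?_⟩
  · simpa only [map_subst2, map_zero, MvPowerSeries.map_X]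
      using congrArg (MvPowerSeries.map f) h₁
  · simpa only [map_subst2, map_zero, MvPowerSeries.map_X]
      using congrArg (MvPowerSeries.map f) h₂
  · simpa only [map_subst2, MvPowerSeries.map_X]
      using congrArg (MvPowerSeries.map f) h₃
  · simpa only [map_subst2, MvPowerSeries.map_X]
      using congrArg (MvPowerSeries.map f) h₄

lemma IsIso.map {F G : MvPowerSeries (Fin 2) A} {φ : PowerSeries A} (hφ : IsIso F G φ)
    (f : A →+* B) :
    IsIso (MvPowerSeries.map f F) (MvPowerSeries.map f G) (PowerSeries.map f φ) := by
  obtain ⟨⟨h₀, h⟩, hu⟩ := hφ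
  refine ⟨⟨?_, ?_⟩, ?_⟩
  · rw [← PowerSeries.coeff_zero_eq_constantCoeff_apply, PowerSeries.coeff_map,
      PowerSeries.coeff_zero_eq_constantCoeff_apply, h₀, map_zero]
  · simpa only [map_substPS, map_subst2, MvPowerSeries.map_X]
      using congrArg (MvPowerSeries.map f) h
  · simpa only [PowerSeries.coeff_map] using hu.map f

lemma substPS_X [DecidableEq τ] (φ : PowerSeries A) (i : τ) :
    substPS φ (MvPowerSeries.X i) = φ.subst (MvPowerSeries.X i) := by
  ext d
  have hdi : d i ≤ deg d := Finsupp.le_degree i d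
  rw [PowerSeries.coeff_subst_single, coeff_substPS,
    sum_eq_single_of_mem (d i) (mem_range_succ_iff.mpr hdi)]
  · rw [MvPowerSeries.coeff_X_pow]
    split_ifs <;> simp
  · intro n _ hn
    rw [MvPowerSeries.coeff_X_pow, if_neg (fun hd => hn (by rw [hd, Finsupp.single_eq_same])),
      mul_zero]

lemma deg_mon2 (i j : ℕ) : deg (mon2 i j) = i + j := by
  simp [deg, mon2, Finsupp.sum_add_index']

lemma eq_mon2 (d : Fin 2 →₀ ℕ) : d = mon2 (d 0) (d 1) := by
  ext x
  fin_cases x <;> simp [mon2]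

lemma coeff_mon2_subst_X_mul_subst_X (φ ψ : PowerSeries A) (i j : ℕ) :
    MvPowerSeries.coeff (mon2 i j)
        (φ.subst (MvPowerSeries.X 0) * ψ.subst (MvPowerSeries.X 1) : MvPowerSeries (Fin 2) A) =
      PowerSeries.coeff i φ * PowerSeries.coeff j ψ := by
  rw [MvPowerSeries.coeff_mul, sum_eq_single (Finsupp.single 0 i, Finsupp.single 1 j)]
  · simp [PowerSeries.coeff_subst_single]
  · rintro ⟨u, v⟩ huv hne
    rw [HasAntidiagonal.mem_antidiagonal] at huv
    rw [PowerSeries.coeff_subst_single, PowerSeries.coeff_subst_single]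
    split_ifs with hu hv <;> simp only [zero_mul, mul_zero]
    dsimp only at huv hu hv
    obtain ⟨a, rfl⟩ : ∃ a, u = Finsupp.single 0 a := ⟨_, hu⟩
    obtain ⟨b, rfl⟩ : ∃ b, v = Finsupp.single 1 b := ⟨_, hv⟩
    have ha : a = i := by simpa [mon2] using DFunLike.congr_fun huv 0
    have hb : b = j := by simpa [mon2] using DFunLike.congr_fun huv 1
    exact absurd (by rw [ha, hb]) hne
  · intro h
    exact absurd (HasAntidiagonal.mem_antidiagonal.mpr (by rw [mon2])) h

lemma coeff_mon2_subst2_substPS_X (G : MvPowerSeries (Fin 2) A) (φ : PowerSeries A) (i j : ℕ) :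
    MvPowerSeries.coeff (mon2 i j)
        (subst2 G (substPS φ (MvPowerSeries.X (0 : Fin 2))) (substPS φ (MvPowerSeries.X 1))) =
      ∑ e ∈ range (i + j + 1) ×ˢ range (i + j + 1),
        MvPowerSeries.coeff (mon2 e.1 e.2) G *
          (PowerSeries.coeff i (φ ^ e.1) * PowerSeries.coeff j (φ ^ e.2)) := by
  simp only [coeff_subst2, deg_mon2, substPS_X,
    ← PowerSeries.subst_pow (PowerSeries.HasSubst.X _), coeff_mon2_subst_X_mul_subst_X]

lemma coeff_pow_of_lt {φ : PowerSeries A} (h₀ : PowerSeries.constantCoeff φ = 0)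
    {n i : ℕ} (h : i < n) : PowerSeries.coeff i (φ ^ n) = 0 := by
  obtain ⟨ψ, rfl⟩ := PowerSeries.X_dvd_iff.mpr h₀
  rw [mul_pow, PowerSeries.coeff_X_pow_mul', if_neg (not_le.mpr h)]

lemma coeff_pow_self {φ : PowerSeries A} (h₀ : PowerSeries.constantCoeff φ = 0) (n : ℕ) :
    PowerSeries.coeff n (φ ^ n) = PowerSeries.coeff 1 φ ^ n := by
  obtain ⟨ψ, rfl⟩ := PowerSeries.X_dvd_iff.mpr h₀
  rw [mul_pow, PowerSeries.coeff_X_pow_mul', if_pos le_rfl, Nat.sub_self,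
    PowerSeries.coeff_zero_eq_constantCoeff_apply, map_pow, ← zero_add 1,
    PowerSeries.coeff_succ_X_mul, PowerSeries.coeff_zero_eq_constantCoeff_apply]

/- The coefficient of `x^i y^j` in `G(φ(x), φ(y))` is `φ'(0)^(i+j)` times that of `G` plus a
combination of coefficients of `G` of lower total degree. -/
lemma eq_zero_of_subst2_substPS_X_eq_zero {G : MvPowerSeries (Fin 2) A} {φ : PowerSeries A}
    (h₀ : PowerSeries.constantCoeff φ = 0) (hu : IsUnit (PowerSeries.coeff 1 φ))
    (h : subst2 G (substPS φ (MvPowerSeries.X (0 : Fin 2))) (substPS φ (MvPowerSeries.X 1)) = 0) :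
    G = 0 := by
  suffices key : ∀ n i j, i + j = n → MvPowerSeries.coeff (mon2 i j) G = 0 by
    ext d
    rw [eq_mon2 d, key _ _ _ rfl, map_zero]
  intro n
  induction n using Nat.strong_induction_on with
  | _ n ih =>
    intro i j hij
    have hc := congrArg (MvPowerSeries.coeff (mon2 i j)) h
    rw [coeff_mon2_subst2_substPS_X, map_zero, sum_eq_single (i, j)] at hc
    · rwa [coeff_pow_self h₀, coeff_pow_self h₀, ((hu.pow i).mul (hu.pow j)).mul_left_eq_zero]
        at hc
    · rintro ⟨a, b⟩ - hne
      rcases lt_or_ge i a with ha | ha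
      · rw [coeff_pow_of_lt h₀ ha, zero_mul, mul_zero]
      rcases lt_or_ge j b with hb | hb
      · rw [coeff_pow_of_lt h₀ hb, mul_zero, mul_zero]
      have hlt : a + b < n := by
        by_contra! hge
        exact hne (by rw [show a = i by omega, show b = j by omega])
      rw [ih _ hlt a b rfl, zero_mul]
    · intro hij'
      exact absurd (by simp only [mem_product, mem_range]; omega) hij'

lemma subst2_substPS_X_injective {G G' : MvPowerSeries (Fin 2) A} {φ : PowerSeries A}
    (h₀ : PowerSeries.constantCoeff φ = 0) (hu : IsUnit (PowerSeries.coeff 1 φ))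
    (h : subst2 G (substPS φ (MvPowerSeries.X (0 : Fin 2))) (substPS φ (MvPowerSeries.X 1)) =
      subst2 G' (substPS φ (MvPowerSeries.X (0 : Fin 2))) (substPS φ (MvPowerSeries.X 1))) :
    G = G' :=
  sub_eq_zero.mp <| eq_zero_of_subst2_substPS_X_eq_zero h₀ hu <| by rw [subst2_sub, h, sub_self]

lemma IsIso.eq_of_isHom {F G G' : MvPowerSeries (Fin 2) A} {φ : PowerSeries A}
    (hG : IsIso F G φ) (hG' : IsHom F G' φ) : G = G' :=
  subst2_substPS_X_injective hG.1.1 hG.2 (hG.1.2.symm.trans hG'.2)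

end FGL

namespace Wring

variable {L R : Type} [CommRing L] [CommRing R]

noncomputable def lift (c : L →+* R) (φ : PowerSeries R) (hu : IsUnit (PowerSeries.coeff 1 φ)) :
    Wring L →+* R :=
  Ideal.Quotient.lift _
    (MvPolynomial.eval₂Hom c fun o =>
      o.elim ↑hu.unit⁻¹ fun i => PowerSeries.coeff (i + 1) φ)
    (fun x hx => by
      obtain ⟨y, rfl⟩ := Ideal.mem_span_singleton'.mp hx
      simp)

lemma lift_comp_etaL (c : L →+* R) (φ : PowerSeries R) (hu : IsUnit (PowerSeries.coeff 1 φ)) :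
    (lift c φ hu).comp (etaL L) = c := by
  ext l
  simp [lift, etaL]

lemma lift_aGen (c : L →+* R) (φ : PowerSeries R) (hu : IsUnit (PowerSeries.coeff 1 φ))
    (i : ℕ) :
    lift c φ hu (aGen L i) = PowerSeries.coeff (i + 1) φ := by
  simp [lift, aGen]

lemma coeff_succ_map_phiU (h : Wring L →+* R) (i : ℕ) :
    PowerSeries.coeff (i + 1) (PowerSeries.map h (phiU L)) = h (aGen L i) := by
  simp [phiU, PowerSeries.coeff_map]

lemma map_lift_phiU (c : L →+* R) {φ : PowerSeries R} (h₀ : PowerSeries.constantCoeff φ = 0)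
    (hu : IsUnit (PowerSeries.coeff 1 φ)) : PowerSeries.map (lift c φ hu) (phiU L) = φ := by
  ext (_ | i)
  · simp [phiU, PowerSeries.coeff_map, h₀]
  · rw [coeff_succ_map_phiU, lift_aGen]

lemma mul_aGen_zero (h : Wring L →+* R) :
    h (Ideal.Quotient.mk _ (MvPolynomial.X none)) * h (aGen L 0) = 1 := by
  rw [aGen, ← map_mul, ← map_mul, (Ideal.Quotient.mk_eq_mk_iff_sub_mem _ 1).mpr
    (Ideal.subset_span (Set.mem_singleton _)), map_one, map_one]

lemma hom_ext {h h' : Wring L →+* R} (hL : h.comp (etaL L) = h'.comp (etaL L))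
    (hφ : PowerSeries.map h (phiU L) = PowerSeries.map h' (phiU L)) : h = h' := by
  have ha (i : ℕ) : h (aGen L i) = h' (aGen L i) := by
    rw [← coeff_succ_map_phiU, hφ, coeff_succ_map_phiU]
  refine Ideal.Quotient.ringHom_ext (MvPolynomial.ringHom_ext (RingHom.congr_fun hL) ?_)
  rintro (_ | i)
  · have hx := mul_aGen_zero h
    have hy := mul_aGen_zero h'
    rw [ha] at hx
    simp only [RingHom.comp_apply]
    linear_combination h' (Ideal.Quotient.mk _ (MvPolynomial.X none)) * hx -
      h (Ideal.Quotient.mk _ (MvPolynomial.X none)) * hy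
  · exact ha i

end Wring

section Pushout

variable {L A₁ A₂ R : Type} [CommRing L] [CommRing A₁] [CommRing A₂] [CommRing R]

lemma T0.hom_ext {h h' : T0 L A₁ A₂ →+* R}
    (e₁ : h.comp (j1 L A₁ A₂) = h'.comp (j1 L A₁ A₂))
    (eW : h.comp (jW L A₁ A₂) = h'.comp (jW L A₁ A₂))
    (e₂ : h.comp (j2 L A₁ A₂) = h'.comp (j2 L A₁ A₂)) : h = h' :=
  Algebra.TensorProduct.ringHom_ext (Algebra.TensorProduct.ringHom_ext e₁ eW) e₂

noncomputable def T0.lift (f₁ : A₁ →+* R) (g : Wring L →+* R) (f₂ : A₂ →+* R) :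
    T0 L A₁ A₂ →+* R :=
  (Algebra.TensorProduct.productMap
    (Algebra.TensorProduct.productMap f₁.toIntAlgHom g.toIntAlgHom) f₂.toIntAlgHom).toRingHom

section

variable (f₁ : A₁ →+* R) (g : Wring L →+* R) (f₂ : A₂ →+* R)

@[simp]
lemma T0.lift_j1 (a : A₁) : T0.lift f₁ g f₂ (j1 L A₁ A₂ a) = f₁ a := by
  change Algebra.TensorProduct.productMap
    (Algebra.TensorProduct.productMap f₁.toIntAlgHom g.toIntAlgHom) f₂.toIntAlgHom
    ((a ⊗ₜ[ℤ] (1 : Wring L)) ⊗ₜ[ℤ] (1 : A₂)) = _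
  simp

@[simp]
lemma T0.lift_jW (w : Wring L) : T0.lift f₁ g f₂ (jW L A₁ A₂ w) = g w := by
  change Algebra.TensorProduct.productMap
    (Algebra.TensorProduct.productMap f₁.toIntAlgHom g.toIntAlgHom) f₂.toIntAlgHom
    (((1 : A₁) ⊗ₜ[ℤ] w) ⊗ₜ[ℤ] (1 : A₂)) = _
  simp

@[simp]
lemma T0.lift_j2 (b : A₂) : T0.lift f₁ g f₂ (j2 L A₁ A₂ b) = f₂ b := by
  change Algebra.TensorProduct.productMap
    (Algebra.TensorProduct.productMap f₁.toIntAlgHom g.toIntAlgHom) f₂.toIntAlgHom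
    (((1 : A₁) ⊗ₜ[ℤ] (1 : Wring L)) ⊗ₜ[ℤ] b) = _
  simp

end

variable {lam1 : L →+* A₁} {lam2 : L →+* A₂} {etaR : L →+* Wring L}

lemma iota1_comp_lam1 :
    (iota1 L A₁ A₂ lam1 lam2 etaR).comp lam1 =
      (iotaW L A₁ A₂ lam1 lam2 etaR).comp (etaL L) := by
  ext l
  exact Ideal.Quotient.eq.mpr (Ideal.subset_span (Or.inl ⟨l, rfl⟩))

lemma iota2_comp_lam2 :
    (iota2 L A₁ A₂ lam1 lam2 etaR).comp lam2 =
      (iotaW L A₁ A₂ lam1 lam2 etaR).comp etaR := by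
  ext l
  exact Ideal.Quotient.eq.mpr (Ideal.subset_span (Or.inr ⟨l, rfl⟩))

noncomputable def Tring.lift (f₁ : A₁ →+* R) (g : Wring L →+* R) (f₂ : A₂ →+* R)
    (h₁ : g.comp (etaL L) = f₁.comp lam1) (h₂ : g.comp etaR = f₂.comp lam2) :
    Tring L A₁ A₂ lam1 lam2 etaR →+* R :=
  Ideal.Quotient.lift _ (T0.lift f₁ g f₂) fun x hx => by
    refine (Ideal.span_le (I := RingHom.ker (T0.lift f₁ g f₂))).mpr ?_ hx
    rintro _ (⟨l, rfl⟩ | ⟨l, rfl⟩)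
    · simpa [sub_eq_zero] using (RingHom.congr_fun h₁ l).symm
    · simpa [sub_eq_zero] using (RingHom.congr_fun h₂ l).symm

section

variable (f₁ : A₁ →+* R) (g : Wring L →+* R) (f₂ : A₂ →+* R)
  (h₁ : g.comp (etaL L) = f₁.comp lam1) (h₂ : g.comp etaR = f₂.comp lam2)

lemma Tring.lift_comp_iota1 :
    (Tring.lift f₁ g f₂ h₁ h₂).comp (iota1 L A₁ A₂ lam1 lam2 etaR) = f₁ :=
  RingHom.ext (T0.lift_j1 f₁ g f₂)

lemma Tring.lift_comp_iotaW :
    (Tring.lift f₁ g f₂ h₁ h₂).comp (iotaW L A₁ A₂ lam1 lam2 etaR) = g :=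
  RingHom.ext (T0.lift_jW f₁ g f₂)

lemma Tring.lift_comp_iota2 :
    (Tring.lift f₁ g f₂ h₁ h₂).comp (iota2 L A₁ A₂ lam1 lam2 etaR) = f₂ :=
  RingHom.ext (T0.lift_j2 f₁ g f₂)

end

lemma Tring.hom_ext {h h' : Tring L A₁ A₂ lam1 lam2 etaR →+* R}
    (e₁ : h.comp (iota1 L A₁ A₂ lam1 lam2 etaR) = h'.comp (iota1 L A₁ A₂ lam1 lam2 etaR))
    (eW : h.comp (iotaW L A₁ A₂ lam1 lam2 etaR) = h'.comp (iotaW L A₁ A₂ lam1 lam2 etaR))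
    (e₂ : h.comp (iota2 L A₁ A₂ lam1 lam2 etaR) = h'.comp (iota2 L A₁ A₂ lam1 lam2 etaR)) :
    h = h' :=
  Ideal.Quotient.ringHom_ext (T0.hom_ext e₁ eW e₂)

end Pushout

theorem pullback_of_formal_group_laws_is_affine_general
    (L : Type) [CommRing L] (Fu : MvPowerSeries (Fin 2) L)
    (huniv : ∀ (A : Type) [CommRing A] (F : MvPowerSeries (Fin 2) A), IsFGL F →
      ∃! g : L →+* A, MvPowerSeries.map g Fu = F)
    -- `G_W` and the right unit `η_R : L → W` classifying it
    (GW : MvPowerSeries (Fin 2) (Wring L))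
    (hphi : IsIso (MvPowerSeries.map (etaL L) Fu) GW (phiU L))
    (etaR : L →+* Wring L) (hetaR : MvPowerSeries.map etaR Fu = GW)
    -- the two formal group laws and their classifying maps
    (A₁ A₂ : Type) [CommRing A₁] [CommRing A₂]
    (F₁ : MvPowerSeries (Fin 2) A₁) (F₂ : MvPowerSeries (Fin 2) A₂)
    (hF₂ : IsFGL F₂)
    (lam1 : L →+* A₁) (lam2 : L →+* A₂)
    (hlam1 : MvPowerSeries.map lam1 Fu = F₁)
    (hlam2 : MvPowerSeries.map lam2 Fu = F₂) :
    ∀ (R : Type) [CommRing R],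
      (∀ k : Tring L A₁ A₂ lam1 lam2 etaR →+* R,
        IsIso (MvPowerSeries.map (k.comp (iota1 L A₁ A₂ lam1 lam2 etaR)) F₁)
          (MvPowerSeries.map (k.comp (iota2 L A₁ A₂ lam1 lam2 etaR)) F₂)
          (PowerSeries.map (k.comp (iotaW L A₁ A₂ lam1 lam2 etaR)) (phiU L))) ∧
      ∀ (f₁ : A₁ →+* R) (f₂ : A₂ →+* R) (φ : PowerSeries R),
        IsIso (MvPowerSeries.map f₁ F₁) (MvPowerSeries.map f₂ F₂) φ →
          ∃! k : Tring L A₁ A₂ lam1 lam2 etaR →+* R,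
            k.comp (iota1 L A₁ A₂ lam1 lam2 etaR) = f₁ ∧
            k.comp (iota2 L A₁ A₂ lam1 lam2 etaR) = f₂ ∧
            PowerSeries.map (k.comp (iotaW L A₁ A₂ lam1 lam2 etaR)) (phiU L) = φ := by
  intro R _
  refine ⟨fun k => ?_, fun f₁ f₂ φ hφ => ?_⟩
  · simpa only [MvPowerSeries.map_map, ← hetaR, ← hlam1, ← hlam2, RingHom.comp_assoc,
      ← iota1_comp_lam1, ← iota2_comp_lam2]
      using hphi.map (k.comp (iotaW L A₁ A₂ lam1 lam2 etaR))
  set g := Wring.lift (f₁.comp lam1) φ hφ.2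
  have hgL : g.comp (etaL L) = f₁.comp lam1 := Wring.lift_comp_etaL _ _ _
  have hgφ : PowerSeries.map g (phiU L) = φ := Wring.map_lift_phiU _ hφ.1.1 hφ.2
  -- `φ` is an isomorphism from `f₁_* F₁` both to `g_* G_W` and to `f₂_* F₂`
  have hgR : g.comp etaR = f₂.comp lam2 := by
    have hgGW : MvPowerSeries.map g GW = MvPowerSeries.map f₂ F₂ := by
      refine IsIso.eq_of_isHom ?_ hφ.1
      simpa only [hgφ, MvPowerSeries.map_map, hgL, ← hlam1] using hphi.map g
    refine (huniv R _ (hF₂.map f₂)).unique ?_ ?_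
    · rw [← MvPowerSeries.map_map, hetaR, hgGW]
    · rw [← MvPowerSeries.map_map, hlam2]
  refine ⟨Tring.lift f₁ g f₂ hgL hgR, ⟨Tring.lift_comp_iota1 .., Tring.lift_comp_iota2 ..,
    by rw [Tring.lift_comp_iotaW, hgφ]⟩, ?_⟩
  rintro k ⟨hk₁, hk₂, hkφ⟩
  refine Tring.hom_ext (by rw [hk₁, Tring.lift_comp_iota1]) (Wring.hom_ext ?_ ?_)
    (by rw [hk₂, Tring.lift_comp_iota2])
  · rw [Tring.lift_comp_iotaW, hgL, RingHom.comp_assoc, ← iota1_comp_lam1,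
      ← RingHom.comp_assoc, hk₁]
  · rw [Tring.lift_comp_iotaW, hgφ, hkφ]

/-- **Strickland's observation.** For formal group laws `F₁, F₂` over `A₁, A₂` with
classifying maps `λ₁, λ₂`, the functor sending a commutative ring `R` to the set of
triples `(f₁, f₂, φ)` — ring homomorphisms `fᵢ : Aᵢ → R` together with an
isomorphism `φ : (f₁)_*F₁ → (f₂)_*F₂` — is represented by `A₁ ⊗_L W ⊗_L A₂`, the
(natural-in-`R`) bijection being given by composition with the canonical maps. -/
theorem pullback_of_formal_group_laws_is_affine
    (L : Type) [CommRing L] (Fu : MvPowerSeries (Fin 2) L) (hFu : IsFGL Fu)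
    (huniv : ∀ (A : Type) [CommRing A] (F : MvPowerSeries (Fin 2) A), IsFGL F →
      ∃! g : L →+* A, MvPowerSeries.map g Fu = F)
    -- `G_W` and the right unit `η_R : L → W` classifying it
    (GW : MvPowerSeries (Fin 2) (Wring L)) (hGW : IsFGL GW)
    (hphi : IsIso (MvPowerSeries.map (etaL L) Fu) GW (phiU L))
    (etaR : L →+* Wring L) (hetaR : MvPowerSeries.map etaR Fu = GW)
    -- the two formal group laws and their classifying maps
    (A₁ A₂ : Type) [CommRing A₁] [CommRing A₂]
    (F₁ : MvPowerSeries (Fin 2) A₁) (F₂ : MvPowerSeries (Fin 2) A₂)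
    (hF₁ : IsFGL F₁) (hF₂ : IsFGL F₂)
    (lam1 : L →+* A₁) (lam2 : L →+* A₂)
    (hlam1 : MvPowerSeries.map lam1 Fu = F₁)
    (hlam2 : MvPowerSeries.map lam2 Fu = F₂) :
    ∀ (R : Type) [CommRing R],
      (∀ k : Tring L A₁ A₂ lam1 lam2 etaR →+* R,
        IsIso (MvPowerSeries.map (k.comp (iota1 L A₁ A₂ lam1 lam2 etaR)) F₁)
          (MvPowerSeries.map (k.comp (iota2 L A₁ A₂ lam1 lam2 etaR)) F₂)
          (PowerSeries.map (k.comp (iotaW L A₁ A₂ lam1 lam2 etaR)) (phiU L))) ∧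
      ∀ (f₁ : A₁ →+* R) (f₂ : A₂ →+* R) (φ : PowerSeries R),
        IsIso (MvPowerSeries.map f₁ F₁) (MvPowerSeries.map f₂ F₂) φ →
          ∃! k : Tring L A₁ A₂ lam1 lam2 etaR →+* R,
            k.comp (iota1 L A₁ A₂ lam1 lam2 etaR) = f₁ ∧
            k.comp (iota2 L A₁ A₂ lam1 lam2 etaR) = f₂ ∧
            PowerSeries.map (k.comp (iotaW L A₁ A₂ lam1 lam2 etaR)) (phiU L) = φ :=
  pullback_of_formal_group_laws_is_affine_general L Fu huniv GW hphi etaR hetaR A₁ A₂ F₁ F₂ hF₂ lam1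
    lam2 hlam1 hlam2
end
end

section
/- Let F be a formal group law over a commutative ring A and let ∂₁F ∈ A⟦x,y⟧ denote the formal partial derivative of F with respect to its first variable. Then the one-variable power series (∂₁F)(0,x) has constant term 1, hence is a unit of A⟦x⟧, and for a power series f ∈ A⟦x⟧ the following are equivalent: (i) f(F(x,y))·(∂₁F)(x,y) = f(x) in A⟦x,y⟧ (the differential f(x)dx is invariant); (ii) f(x) = f(0)·((∂₁F)(0,x))⁻¹. In particular, the A-module of invariant differentials of F is free of rank 1, generated by dx/(∂₁F)(0,x). -/
noncomputable section

open FGL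
/-- The formal partial derivative `∂₁F` of a two-variable power series with respect
to its first variable: if `F = Σ c_{ij} x^i y^j` then `∂₁F = Σ i·c_{ij} x^{i-1} y^j`. -/
def dx1 {A : Type*} [CommRing A] (F : MvPowerSeries (Fin 2) A) :
    MvPowerSeries (Fin 2) A :=
  fun d => ((d 0 + 1 : ℕ) : A) * MvPowerSeries.coeff (d + Finsupp.single 0 1) F

/-- The one-variable power series `(∂₁F)(0, x)`. -/
def dx1AtZero {A : Type*} [CommRing A] (F : MvPowerSeries (Fin 2) A) :
    PowerSeries A :=
  PowerSeries.mk fun j => MvPowerSeries.coeff (Finsupp.single 1 j) (dx1 F)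

/-! Differentiating associativity `F(F(t,x),y) = F(t,F(x,y))` with respect to `t` at `t = 0`
gives `∂₁F(x,y) · g(x) = g(F(x,y))` for `g = (∂₁F)(0,·)`, and `g(0) = 1` because `F(x,0) = x`.
Hence `∂₁F = g(F)/g(x)`, so `u(F)·∂₁F = u(x)` for `u = g⁻¹`, and the same holds for its
multiples. Conversely, putting `x = 0` in `f(F)·∂₁F = f(x)` and using `F(0,y) = y` gives
`f(y)·g(y) = f(0)`.

Since every substituted series has zero constant term, the truncated substitutions `substPS`,
`subst2` coincide with `PowerSeries.subst`, `MvPowerSeries.subst`; setting variables to `0` is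
`MvPowerSeries.killCompl`, and `∂/∂t` at `t = 0` is `killCompl` after `pderiv`. -/

namespace Finsupp

theorem finsum_eq_finsum_add_single {ι M : Type*} [AddCommMonoid M] {ψ : (ι →₀ ℕ) → M}
    (i : ι) (h : ∀ m, m i = 0 → ψ m = 0) : ∑ᶠ m, ψ m = ∑ᶠ m, ψ (m + single i 1) := by
  rw [← finsum_mem_range (add_left_injective (single i 1)), ← finsum_mem_univ]
  refine finsum_mem_inter_support_eq ψ _ _ (Set.ext fun m => ?_)
  simp only [Set.mem_inter_iff, Set.mem_univ, true_and, Set.mem_range, Function.mem_support,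
    iff_and_self]
  intro hm
  refine ⟨m - single i 1, tsub_add_cancel_of_le (single_le_iff.2 ?_)⟩
  exact Nat.one_le_iff_ne_zero.2 fun hmi => hm (h m hmi)

theorem prod_pow_fin_two {R : Type*} [CommMonoid R] (a : Fin 2 → R) (m : Fin 2 →₀ ℕ) :
    (m.prod fun s k => a s ^ k) = a 0 ^ m 0 * a 1 ^ m 1 := by
  rw [prod_fintype _ _ fun _ => pow_zero _, Fin.prod_univ_two]

end Finsupp

namespace MvPowerSeries

open Function.Embedding

variable {A : Type*} [CommRing A] {ι σ τ : Type*}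

theorem coeff_pow_eq_zero_of_degree_lt {P : MvPowerSeries τ A} (hP : constantCoeff P = 0)
    {d : τ →₀ ℕ} {n : ℕ} (h : d.degree < n) : coeff d (P ^ n) = 0 :=
  coeff_of_lt_order ((Nat.cast_lt.2 h).trans_le (le_order_pow_of_constantCoeff_eq_zero n hP))

theorem coeff_pow_mul_pow_eq_zero_of_degree_lt {P Q : MvPowerSeries τ A}
    (hP : constantCoeff P = 0) (hQ : constantCoeff Q = 0) {d : τ →₀ ℕ} {i j : ℕ}
    (h : d.degree < i + j) : coeff d (P ^ i * Q ^ j) = 0 :=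
  coeff_of_lt_order <| (Nat.cast_lt.2 h).trans_le <| by
    push_cast
    exact (add_le_add (le_order_pow_of_constantCoeff_eq_zero i hP)
      (le_order_pow_of_constantCoeff_eq_zero j hQ)).trans le_order_mul

theorem hasSubst_fin_two {P Q : MvPowerSeries τ A} (hP : constantCoeff P = 0)
    (hQ : constantCoeff Q = 0) : HasSubst ![P, Q] :=
  hasSubst_of_constantCoeff_zero (by simp [Fin.forall_fin_two, hP, hQ])

theorem subst_X_zero_X_one (G : MvPowerSeries (Fin 2) A) : subst ![X 0, X 1] G = G := by
  rw [show ![X 0, X 1] = (X : Fin 2 → MvPowerSeries (Fin 2) A) by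
    funext i; fin_cases i <;> rfl, subst_self, id]

theorem coeff_subst_mul {a : ι → MvPowerSeries τ A} (ha : HasSubst a) (f : MvPowerSeries ι A)
    (c : MvPowerSeries τ A) (d : τ →₀ ℕ) :
    coeff d (subst a f * c) =
      ∑ᶠ m, coeff m f • coeff d ((m.prod fun s k => a s ^ k) * c) := by
  classical
  simp_rw [coeff_mul, coeff_subst ha, finsum_mul' _ _ (coeff_subst_finite ha f _)]
  rw [sum_finsum_comm _ _ fun p _ => (coeff_subst_finite ha f p.1).subset
    (Function.support_mul_subset_left _ _)]
  refine finsum_congr fun m => ?_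
  simp_rw [Finset.smul_sum, smul_mul_assoc]

theorem constantCoeff_killCompl (e : σ ↪ τ) (P : MvPowerSeries τ A) :
    constantCoeff (killCompl e P) = constantCoeff P := by
  rw [← coeff_zero_eq_constantCoeff_apply, coeff_killCompl, Finsupp.embDomain_zero,
    coeff_zero_eq_constantCoeff_apply]

theorem killCompl_punit_X [DecidableEq τ] (i j : τ) :
    killCompl (punit i : Unit ↪ τ) (X j : MvPowerSeries τ A) =
      if j = i then PowerSeries.X else 0 := by
  split_ifs with h
  · subst h
    exact killCompl_X (e := punit j) ()
  · exact killCompl_X_eq_zero fun ⟨_, hx⟩ => h hx.symm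

theorem HasSubst.killCompl {a : ι → MvPowerSeries τ A} (ha : HasSubst a) (e : σ ↪ τ) :
    HasSubst (killCompl e ∘ a) where
  const_coeff s := by simpa [constantCoeff_killCompl] using ha.const_coeff s
  coeff_zero d := by simpa [coeff_killCompl] using ha.coeff_zero (d.embDomain e)

theorem killCompl_subst {a : ι → MvPowerSeries τ A} (ha : HasSubst a) (e : σ ↪ τ)
    (f : MvPowerSeries ι A) : killCompl e (subst a f) = subst (killCompl e ∘ a) f := by
  ext d
  rw [coeff_killCompl, coeff_subst ha, coeff_subst (ha.killCompl e)]
  refine finsum_congr fun m => ?_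
  rw [← coeff_killCompl, map_finsuppProd]
  simp

theorem killCompl_eq_subst (e : σ ↪ τ) (f : MvPowerSeries τ A) :
    killCompl e f = subst (killCompl e ∘ X) f := by
  rw [← killCompl_subst HasSubst.X, subst_self, id]

theorem _root_.PowerSeries.killCompl_subst {P : MvPowerSeries τ A} (hP : constantCoeff P = 0)
    (e : σ ↪ τ) (f : PowerSeries A) :
    killCompl e (PowerSeries.subst P f) = PowerSeries.subst (killCompl e P) f :=
  MvPowerSeries.killCompl_subst (PowerSeries.HasSubst.of_constantCoeff_zero hP).const e f

theorem killCompl_subst_fin_two {P Q : MvPowerSeries τ A} (hP : constantCoeff P = 0)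
    (hQ : constantCoeff Q = 0) (e : σ ↪ τ) (F : MvPowerSeries (Fin 2) A) :
    killCompl e (subst ![P, Q] F) = subst ![killCompl e P, killCompl e Q] F := by
  rw [killCompl_subst (hasSubst_fin_two hP hQ)]
  congr 1
  funext i
  fin_cases i <;> rfl

theorem subst_zero_left {h : MvPowerSeries τ A} (hh : constantCoeff h = 0)
    (G : MvPowerSeries (Fin 2) A) :
    subst ![0, h] G = PowerSeries.subst h (killCompl (punit 1 : Unit ↪ Fin 2) G) := by
  have hb := (PowerSeries.HasSubst.of_constantCoeff_zero hh).const
  rw [killCompl_eq_subst, PowerSeries.subst_def,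
    subst_comp_subst_apply (HasSubst.X.killCompl _) hb]
  congr 1
  funext i
  fin_cases i
  · change 0 = subst _ (killCompl (punit 1 : Unit ↪ Fin 2) (X 0))
    rw [killCompl_punit_X, if_neg (by decide), ← coe_substAlgHom hb, map_zero]
  · change h = subst _ (killCompl (punit 1 : Unit ↪ Fin 2) (X 1))
    rw [killCompl_punit_X, if_pos rfl]
    exact (subst_X hb ()).symm

theorem coeff_killCompl_pderiv {e : σ ↪ τ} {v : τ} (hv : v ∉ Set.range e)
    (P : MvPowerSeries τ A) (d : σ →₀ ℕ) :
    coeff d (killCompl e (pderiv A v P)) = coeff (d.embDomain e + Finsupp.single v 1) P := by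
  rw [coeff_killCompl, coeff_pderiv, Finsupp.embDomain_of_notMem_range _ _ _ hv]
  simp

theorem killCompl_pderiv_pow_mul_pow {e : σ ↪ τ} {v : τ} {P Q : MvPowerSeries τ A}
    (hQ : killCompl e (pderiv A v Q) = 0) (i j : ℕ) :
    killCompl e (pderiv A v (P ^ i * Q ^ j)) =
      i • (killCompl e P ^ (i - 1) * killCompl e Q ^ j * killCompl e (pderiv A v P)) := by
  simp only [Derivation.leibniz, Derivation.leibniz_pow, smul_eq_mul, nsmul_eq_mul, map_add,
    map_mul, map_pow, map_natCast, hQ, mul_zero, zero_add]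
  ring

theorem killCompl_pderiv_subst {e : σ ↪ τ} {v : τ} (hv : v ∉ Set.range e)
    {P Q : MvPowerSeries τ A} (hP : constantCoeff P = 0) (hQ : constantCoeff Q = 0)
    (hQv : killCompl e (pderiv A v Q) = 0) (F : MvPowerSeries (Fin 2) A) :
    killCompl e (pderiv A v (subst ![P, Q] F)) =
      subst ![killCompl e P, killCompl e Q] (pderiv A 0 F) * killCompl e (pderiv A v P) := by
  have hb : HasSubst ![killCompl e P, killCompl e Q] :=
    hasSubst_fin_two (by rw [constantCoeff_killCompl, hP]) (by rw [constantCoeff_killCompl, hQ])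
  ext d
  rw [coeff_killCompl_pderiv hv, coeff_subst (hasSubst_fin_two hP hQ), coeff_subst_mul hb]
  simp_rw [Finsupp.prod_pow_fin_two, ← coeff_killCompl_pderiv hv]
  simp only [Matrix.cons_val_zero, Matrix.cons_val_one, killCompl_pderiv_pow_mul_pow hQv]
  rw [Finsupp.finsum_eq_finsum_add_single 0 fun m hm => by simp [hm]]
  refine finsum_congr fun m => ?_
  simp only [coeff_pderiv, map_nsmul, smul_eq_mul, Finsupp.add_apply, Finsupp.single_apply]
  simp only [↓reduceIte, zero_ne_one, add_zero, add_tsub_cancel_right, nsmul_eq_mul,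
    Nat.cast_add, Nat.cast_one]
  ring

end MvPowerSeries

namespace FGL

open MvPowerSeries Function.Embedding

variable {A : Type*} [CommRing A] {τ : Type*}

theorem substPS_eq_subst {P : MvPowerSeries τ A} (hP : constantCoeff P = 0)
    (f : PowerSeries A) : substPS f P = PowerSeries.subst P f := by
  ext d
  rw [PowerSeries.coeff_subst (.of_constantCoeff_zero hP),
    finsum_eq_sum_of_support_subset (s := Finset.range (d.degree + 1))]
  · rfl
  · intro n hn
    rw [Finset.coe_range, Set.mem_Iio]
    by_contra h
    exact hn (by dsimp only; rw [coeff_pow_eq_zero_of_degree_lt hP (by omega), smul_zero])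

theorem mon2_apply_zero (i j : ℕ) : mon2 i j 0 = i := by simp [mon2]

theorem mon2_apply_one (i j : ℕ) : mon2 i j 1 = j := by simp [mon2]

theorem mon2_bijective : Function.Bijective fun p : ℕ × ℕ => mon2 p.1 p.2 := by
  refine ⟨fun p q h => ?_, fun m => ⟨(m 0, m 1), ?_⟩⟩
  · have h0 := congrArg (· 0) h
    have h1 := congrArg (· 1) h
    simp only [mon2_apply_zero, mon2_apply_one] at h0 h1
    exact Prod.ext h0 h1
  · ext k
    fin_cases k <;> simp [mon2_apply_zero, mon2_apply_one]

theorem subst2_eq_subst {g h : MvPowerSeries τ A} (hg : constantCoeff g = 0)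
    (hh : constantCoeff h = 0) (F : MvPowerSeries (Fin 2) A) :
    subst2 F g h = subst ![g, h] F := by
  ext d
  rw [coeff_subst (hasSubst_fin_two hg hh),
    ← finsum_comp_equiv (Equiv.ofBijective _ mon2_bijective),
    finsum_eq_sum_of_support_subset
      (s := Finset.range (d.degree + 1) ×ˢ Finset.range (d.degree + 1))]
  · refine Finset.sum_congr rfl fun p _ => ?_
    simp [mon2_apply_zero, mon2_apply_one]
  · intro p hp
    rw [Finset.coe_product, Finset.coe_range, Set.mem_prod, Set.mem_Iio, Set.mem_Iio]
    by_contra h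
    refine hp ?_
    dsimp only
    rw [Equiv.ofBijective_apply, Finsupp.prod_pow_fin_two]
    simp only [Matrix.cons_val_zero, Matrix.cons_val_one, mon2_apply_zero, mon2_apply_one]
    rw [coeff_pow_mul_pow_eq_zero_of_degree_lt hg hh (by omega), smul_zero]

theorem dx1_eq_pderiv (F : MvPowerSeries (Fin 2) A) : dx1 F = pderiv A 0 F := by
  ext d
  rw [coeff_pderiv, mul_comm]
  show ((d 0 + 1 : ℕ) : A) * _ = _
  push_cast
  rfl

theorem dx1AtZero_eq (F : MvPowerSeries (Fin 2) A) :
    dx1AtZero F = killCompl (punit 1 : Unit ↪ Fin 2) (pderiv A 0 F) := by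
  ext n
  rw [dx1AtZero, PowerSeries.coeff_mk, PowerSeries.coeff, coeff_killCompl,
    Finsupp.embDomain_single, dx1_eq_pderiv]
  rfl

variable {F : MvPowerSeries (Fin 2) A}

theorem IsFGL.killCompl_punit_zero (hF : IsFGL F) :
    killCompl (punit 0 : Unit ↪ Fin 2) F = PowerSeries.X := by
  have h := congrArg (killCompl (punit 0 : Unit ↪ ℕ)) hF.1
  rw [subst2_eq_subst (constantCoeff_X 0) (map_zero _),
    killCompl_subst (hasSubst_fin_two (constantCoeff_X 0) (map_zero _)),
    killCompl_punit_X, if_pos rfl] at h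
  rw [killCompl_eq_subst, ← h]
  congr 1
  funext i
  fin_cases i <;> simp [killCompl_punit_X]

theorem IsFGL.killCompl_punit_one (hF : IsFGL F) :
    killCompl (punit 1 : Unit ↪ Fin 2) F = PowerSeries.X := by
  have h := congrArg (killCompl (punit 1 : Unit ↪ ℕ)) hF.2.1
  rw [subst2_eq_subst (map_zero _) (constantCoeff_X 1),
    killCompl_subst (hasSubst_fin_two (map_zero _) (constantCoeff_X 1)),
    killCompl_punit_X, if_pos rfl] at h
  rw [killCompl_eq_subst, ← h]
  congr 1
  funext i
  fin_cases i <;> simp [killCompl_punit_X]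

theorem IsFGL.constantCoeff_eq_zero (hF : IsFGL F) : constantCoeff F = 0 := by
  rw [← constantCoeff_killCompl (punit 1 : Unit ↪ Fin 2), hF.killCompl_punit_one]
  exact constantCoeff_X ()

theorem IsFGL.subst_zero_left {h : MvPowerSeries τ A} (hF : IsFGL F)
    (hh : constantCoeff h = 0) : subst ![0, h] F = h := by
  rw [MvPowerSeries.subst_zero_left hh, hF.killCompl_punit_one,
    PowerSeries.subst_X (.of_constantCoeff_zero hh)]

theorem IsFGL.constantCoeff_dx1AtZero (hF : IsFGL F) :
    PowerSeries.constantCoeff (dx1AtZero F) = 1 := by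
  have h := congrArg (PowerSeries.coeff 1) hF.killCompl_punit_zero
  rw [PowerSeries.coeff_one_X, PowerSeries.coeff, coeff_killCompl,
    Finsupp.embDomain_single] at h
  rw [dx1AtZero_eq, ← PowerSeries.coeff_zero_eq_constantCoeff_apply, PowerSeries.coeff,
    Finsupp.single_zero, coeff_killCompl_pderiv fun ⟨_, h⟩ => one_ne_zero h,
    Finsupp.embDomain_zero, zero_add]
  exact h

theorem IsFGL.constantCoeff_subst_X_X (hF : IsFGL F) (i j : τ) :
    constantCoeff (subst ![(X i : MvPowerSeries τ A), X j] F) = 0 :=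
  constantCoeff_subst_eq_zero (hasSubst_fin_two (constantCoeff_X i) (constantCoeff_X j))
    (by simp [Fin.forall_fin_two]) hF.constantCoeff_eq_zero

theorem IsFGL.subst_assoc (hF : IsFGL F) :
    subst ![subst ![X 0, X 1] F, X 2] F =
      (subst ![X 0, subst ![X 1, X 2] F] F : MvPowerSeries (Fin 3) A) := by
  have h := hF.2.2.2
  rwa [subst2_eq_subst (constantCoeff_X 0) (constantCoeff_X 1),
    subst2_eq_subst (constantCoeff_X 1) (constantCoeff_X 2),
    subst2_eq_subst (hF.constantCoeff_subst_X_X 0 1) (constantCoeff_X 2),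
    subst2_eq_subst (constantCoeff_X 0) (hF.constantCoeff_subst_X_X 1 2)] at h

theorem IsFGL.pderiv_mul_subst_dx1AtZero (hF : IsFGL F) :
    pderiv A 0 F * PowerSeries.subst (X 0) (dx1AtZero F) =
      PowerSeries.subst F (dx1AtZero F) := by
  -- `K` sets `t = X 0` to zero and renames `x = X 1`, `y = X 2` to `X 0`, `X 1`.
  set K : MvPowerSeries (Fin 3) A →ₐ[A] MvPowerSeries (Fin 2) A := killCompl (Fin.succEmb 2)
  have hv : (0 : Fin 3) ∉ Set.range (Fin.succEmb 2) := fun ⟨i, h⟩ => Fin.succ_ne_zero i h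
  have hX0 : K (X 0) = 0 := killCompl_X_eq_zero hv
  have hX1 : K (X 1) = X 0 := killCompl_X (e := Fin.succEmb 2) 0
  have hX2 : K (X 2) = X 1 := killCompl_X (e := Fin.succEmb 2) 1
  have hdX0 : K (pderiv A 0 (X 0)) = 1 := by simp [K]
  have hdX1 : K (pderiv A 0 (X 1)) = 0 := by simp [K, pderiv_X_of_ne]
  have hdX2 : K (pderiv A 0 (X 2)) = 0 := by simp [K, pderiv_X_of_ne]
  have hV : K (subst ![X 0, X 1] F) = X 0 := by
    rw [killCompl_subst_fin_two (constantCoeff_X 0) (constantCoeff_X 1), hX0, hX1,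
      hF.subst_zero_left (constantCoeff_X 0)]
  have hW : K (subst ![X 1, X 2] F) = F := by
    rw [killCompl_subst_fin_two (constantCoeff_X 1) (constantCoeff_X 2), hX1, hX2,
      subst_X_zero_X_one]
  have hdV : K (pderiv A 0 (subst ![X 0, X 1] F)) = PowerSeries.subst (X 0) (dx1AtZero F) := by
    rw [killCompl_pderiv_subst hv (constantCoeff_X 0) (constantCoeff_X 1) hdX1, hX0, hX1, hdX0,
      mul_one, MvPowerSeries.subst_zero_left (constantCoeff_X 0), ← dx1AtZero_eq]
  have hdW : K (pderiv A 0 (subst ![X 1, X 2] F)) = 0 := by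
    rw [killCompl_pderiv_subst hv (constantCoeff_X 1) (constantCoeff_X 2) hdX2, hdX1, mul_zero]
  have h := congrArg (K ∘ pderiv A 0) hF.subst_assoc
  simp only [Function.comp_apply] at h
  rwa [killCompl_pderiv_subst hv (hF.constantCoeff_subst_X_X 0 1) (constantCoeff_X 2) hdX2,
    killCompl_pderiv_subst hv (constantCoeff_X 0) (hF.constantCoeff_subst_X_X 1 2) hdW, hV, hX2,
    hdV, hX0, hW, hdX0, mul_one, subst_X_zero_X_one,
    MvPowerSeries.subst_zero_left hF.constantCoeff_eq_zero, ← dx1AtZero_eq] at h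

theorem IsFGL.mul_dx1AtZero_of_invariant (hF : IsFGL F) {f : PowerSeries A}
    (h : PowerSeries.subst F f * pderiv A 0 F = PowerSeries.subst (X 0) f) :
    f * dx1AtZero F = PowerSeries.C (PowerSeries.constantCoeff f) := by
  have h0 := congrArg (killCompl (punit 1 : Unit ↪ Fin 2)) h
  rwa [map_mul, PowerSeries.killCompl_subst hF.constantCoeff_eq_zero,
    PowerSeries.killCompl_subst (constantCoeff_X 0), hF.killCompl_punit_one,
    killCompl_punit_X, if_neg (by decide), ← dx1AtZero_eq, PowerSeries.X_subst,
    PowerSeries.subst_zero_eq_C_constantCoeff, Algebra.algebraMap_self, map_id,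
    RingHom.id_apply] at h0

theorem IsFGL.invariant_of_mul_eq_one (hF : IsFGL F) {u : PowerSeries A}
    (hu : dx1AtZero F * u = 1) :
    PowerSeries.subst F u * pderiv A 0 F = PowerSeries.subst (X 0) u := by
  have hunit {P : MvPowerSeries (Fin 2) A} (hP : constantCoeff P = 0) :
      PowerSeries.subst P (dx1AtZero F) * PowerSeries.subst P u = 1 := by
    have hP' := PowerSeries.HasSubst.of_constantCoeff_zero hP
    rw [← PowerSeries.subst_mul hP', hu, ← PowerSeries.coe_substAlgHom hP', map_one]
  calc PowerSeries.subst F u * pderiv A 0 F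
      = PowerSeries.subst F u * pderiv A 0 F *
          (PowerSeries.subst (X 0) (dx1AtZero F) * PowerSeries.subst (X 0) u) := by
        rw [hunit (constantCoeff_X 0), mul_one]
    _ = PowerSeries.subst F (dx1AtZero F) * PowerSeries.subst F u *
          PowerSeries.subst (X 0) u := by
        rw [← hF.pderiv_mul_subst_dx1AtZero]
        ring
    _ = PowerSeries.subst (X 0) u := by
        rw [hunit hF.constantCoeff_eq_zero, one_mul]

end FGL

/-- **Invariant differentials.** For a formal group law `F` over `A`, the series
`(∂₁F)(0,x)` has constant term `1`, hence is a unit of `A⟦x⟧`, and a differential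
`f(x)dx` is invariant, i.e. `f(F(x,y))·∂₁F(x,y) = f(x)`, if and only if
`f(x) = f(0)·((∂₁F)(0,x))⁻¹`.  In particular the module of invariant differentials
is free of rank one, generated by `dx/(∂₁F)(0,x)`. -/
theorem invariant_differentials (A : Type*) [CommRing A]
    (F : MvPowerSeries (Fin 2) A) (hF : IsFGL F) :
    PowerSeries.constantCoeff (dx1AtZero F) = 1 ∧
    IsUnit (dx1AtZero F) ∧
    ∀ f : PowerSeries A,
      substPS f F * dx1 F = substPS f (MvPowerSeries.X 0) ↔
        f = PowerSeries.C (PowerSeries.constantCoeff f) *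
            PowerSeries.invOfUnit (dx1AtZero F) 1 := by
  have hg : dx1AtZero F * PowerSeries.invOfUnit (dx1AtZero F) 1 = 1 :=
    PowerSeries.mul_invOfUnit _ _ (by rw [hF.constantCoeff_dx1AtZero]; rfl)
  have hF0 := hF.constantCoeff_eq_zero
  have hX0 := MvPowerSeries.constantCoeff_X (R := A) (0 : Fin 2)
  refine ⟨hF.constantCoeff_dx1AtZero, IsUnit.of_mul_eq_one _ hg, fun f => ?_⟩
  rw [substPS_eq_subst hF0, substPS_eq_subst hX0, dx1_eq_pderiv]
  constructor
  · intro h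
    rw [← hF.mul_dx1AtZero_of_invariant h, mul_assoc, hg, mul_one]
  · intro h
    rw [h, PowerSeries.subst_mul (.of_constantCoeff_zero hF0),
      PowerSeries.subst_mul (.of_constantCoeff_zero hX0), mul_assoc,
      hF.invariant_of_mul_eq_one hg, PowerSeries.subst_C, PowerSeries.subst_C]
end
end
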